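/- arXiv:2206.02164 — 2 statements merged into one kernel-verified Lean document; each statement's English description precedes it below -/
import Mathlib

section
/- (Finite-sample FWL theorem) Let y = θ·d + X·a + e in ℝᵐ where X is an m×n matrix of full column rank, d ∈ ℝᵐ, and e ∈ ℝᵐ. Let M := I - X(XᵀX)⁻¹Xᵀ be the projection onto the orthogonal complement of the column space of X. If (Md)ᵀ(Md) ≠ 0, then the OLS slope of My on Md equals θ + (Md)ᵀe/((Md)ᵀ(Md)). In particular, if Xᵀe = 0 and dᵀe = 0, the slope equals θ. -/
open Matrix

theorem stmt5 (m n : ℕ) (X : Matrix (Fin m) (Fin n) ℝ) (hrank : X.rank = n)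
    (d e : Fin m → ℝ) (a : Fin n → ℝ) (θ : ℝ)
    (y : Fin m → ℝ) (hy : y = θ • d + X.mulVec a + e)
    (M : Matrix (Fin m) (Fin m) ℝ)
    (hM : M = 1 - X * (X.transpose * X)⁻¹ * X.transpose)
    (h0 : M.mulVec d ⬝ᵥ M.mulVec d ≠ 0) :
    (M.mulVec d ⬝ᵥ M.mulVec y) / (M.mulVec d ⬝ᵥ M.mulVec d)
      = θ + (M.mulVec d ⬝ᵥ e) / (M.mulVec d ⬝ᵥ M.mulVec d) ∧
    (X.transpose.mulVec e = 0 → d ⬝ᵥ e = 0 →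
      (M.mulVec d ⬝ᵥ M.mulVec y) / (M.mulVec d ⬝ᵥ M.mulVec d) = θ) := by
  -- XᵀX is invertible
  have hker : LinearMap.ker X.mulVecLin = ⊥ := by
    have h1 := LinearMap.finrank_range_add_finrank_ker X.mulVecLin
    rw [show Module.finrank ℝ (LinearMap.range X.mulVecLin) = n from hrank] at h1
    simp only [Module.finrank_pi, Fintype.card_fin] at h1
    have : Module.finrank ℝ (LinearMap.ker X.mulVecLin) = 0 := by omega
    exact Submodule.finrank_eq_zero.mp this
  have hker2 : LinearMap.ker (Xᵀ * X).mulVecLin = ⊥ := by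
    rw [Matrix.ker_mulVecLin_transpose_mul_self]; exact hker
  have hU : IsUnit (Xᵀ * X) := by
    rw [← Matrix.mulVec_injective_iff_isUnit]
    intro u v huv
    have : (Xᵀ * X).mulVecLin u = (Xᵀ * X).mulVecLin v := huv
    exact LinearMap.ker_eq_bot.mp hker2 this
  have hUdet : IsUnit (Xᵀ * X).det := (Matrix.isUnit_iff_isUnit_det _).mp hU
  have hcancel : (Xᵀ * X)⁻¹ * (Xᵀ * X) = 1 := Matrix.nonsing_inv_mul _ hUdet
  -- M * X = 0
  have hMX : M * X = 0 := by
    rw [hM, Matrix.sub_mul, Matrix.one_mul]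
    rw [Matrix.mul_assoc (X * (Xᵀ * X)⁻¹) Xᵀ X, Matrix.mul_assoc X (Xᵀ * X)⁻¹ (Xᵀ * X),
      hcancel, Matrix.mul_one, sub_self]
  -- M symmetric
  have hMs : Mᵀ = M := by
    rw [hM]
    simp only [Matrix.transpose_sub, Matrix.transpose_one, Matrix.transpose_mul,
      Matrix.transpose_transpose, Matrix.transpose_nonsing_inv]
    rw [Matrix.mul_assoc]
  -- M idempotent
  have hMM : M * M = M := by
    nth_rewrite 2 [hM]
    rw [Matrix.mul_sub, Matrix.mul_one, ← Matrix.mul_assoc, ← Matrix.mul_assoc,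
      Matrix.mul_assoc M X (Xᵀ * X)⁻¹]
    rw [← Matrix.mul_assoc M X (Xᵀ * X)⁻¹, hMX, Matrix.zero_mul, Matrix.zero_mul, sub_zero]
  -- M y = θ • M d + M e
  have hMy : M.mulVec y = θ • M.mulVec d + M.mulVec e := by
    rw [hy, Matrix.mulVec_add, Matrix.mulVec_add, Matrix.mulVec_smul,
      Matrix.mulVec_mulVec, hMX, Matrix.zero_mulVec, add_zero]
  -- key: Md ⬝ Me = Md ⬝ e
  have key : M.mulVec d ⬝ᵥ M.mulVec e = M.mulVec d ⬝ᵥ e := by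
    rw [Matrix.dotProduct_mulVec, ← Matrix.mulVec_transpose, hMs,
      Matrix.mulVec_mulVec, hMM]
  have hdot : M.mulVec d ⬝ᵥ M.mulVec y
      = θ * (M.mulVec d ⬝ᵥ M.mulVec d) + M.mulVec d ⬝ᵥ e := by
    rw [hMy, dotProduct_add, dotProduct_smul, key, smul_eq_mul]
  have h1 : (M.mulVec d ⬝ᵥ M.mulVec y) / (M.mulVec d ⬝ᵥ M.mulVec d)
      = θ + (M.mulVec d ⬝ᵥ e) / (M.mulVec d ⬝ᵥ M.mulVec d) := by
    rw [hdot, add_div, mul_div_assoc, div_self h0, mul_one]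
  refine ⟨h1, fun hXe hde => ?_⟩
  have hMe : M.mulVec e = e := by
    rw [hM, Matrix.sub_mulVec, Matrix.one_mulVec, ← Matrix.mulVec_mulVec, hXe,
      Matrix.mulVec_zero, sub_zero]
  have hMde : M.mulVec d ⬝ᵥ e = 0 := by
    rw [dotProduct_comm, Matrix.dotProduct_mulVec, ← Matrix.mulVec_transpose,
      hMs, hMe, dotProduct_comm]
    exact hde
  rw [h1, hMde, zero_div, add_zero]
end

section
/- If Z is a set of nodes in a directed acyclic graph G satisfying the back-door criterion relative to an ordered pair (D, Y) — i.e., no node of Z is a descendant of D, and Z blocks every path from D to Y that contains an arrow into D — then Z d-separates D from Y in the graph obtained from G by removing all edges emanating from D. -/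
/-- A walk in the skeleton of the directed graph `E`: a list of vertices in which
consecutive vertices are joined by an edge in one direction or the other,
with no repeated vertices, going from `D` to `Y`. -/
def IsPathBetween {V : Type*} (E : V → V → Prop) (D Y : V) (p : List V) : Prop :=
  p.Chain' (fun a b => E a b ∨ E b a) ∧ p.Nodup ∧ p.head? = some D ∧ p.getLast? = some Y

/-- The path `p` starts with an arrow pointing into its first vertex. -/
def ArrowIntoHead {V : Type*} (E : V → V → Prop) (p : List V) : Prop :=
  ∃ a b rest, p = a :: b :: rest ∧ E b a

/-- The path `p` is blocked by the conditioning set `Z` (Pearl's d-separation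
criterion for a single path): some interior vertex `b` is either a collider
neither in `Z` nor with a descendant in `Z`, or a non-collider belonging to `Z`. -/
def Blocked {V : Type*} (E : V → V → Prop) (Z : Set V) (p : List V) : Prop :=
  ∃ (i : ℕ) (h : i + 2 < p.length),
    ((E (p.get ⟨i, by omega⟩) (p.get ⟨i + 1, by omega⟩) ∧
        E (p.get ⟨i + 2, h⟩) (p.get ⟨i + 1, by omega⟩)) ∧
      p.get ⟨i + 1, by omega⟩ ∉ Z ∧
      ∀ w ∈ Z, ¬ Relation.ReflTransGen E (p.get ⟨i + 1, by omega⟩) w) ∨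
    (¬ (E (p.get ⟨i, by omega⟩) (p.get ⟨i + 1, by omega⟩) ∧
        E (p.get ⟨i + 2, h⟩) (p.get ⟨i + 1, by omega⟩)) ∧
      p.get ⟨i + 1, by omega⟩ ∈ Z)

/-- The back-door criterion of `Z` relative to the ordered pair `(D, Y)`:
no node of `Z` is a descendant of `D`, and `Z` blocks every path from `D` to `Y`
that contains an arrow into `D`. -/
def BackDoor {V : Type*} (E : V → V → Prop) (D Y : V) (Z : Set V) : Prop :=
  (∀ z ∈ Z, ¬ Relation.ReflTransGen E D z) ∧
  ∀ p : List V, IsPathBetween E D Y p → ArrowIntoHead E p → Blocked E Z p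


/-!
With the edges out of `D` removed, a path from `D` to `Y` must open with an arrow into `D`,
so in `G` it is a back-door path and `Z` blocks it there. Removing edges can only shrink the
descendant sets and turn colliders into non-colliders, and no collider of the path loses an
edge: its sources differ from `D`, except possibly in a path `D → b ← D ...`, which would be
a 2-cycle.
-/

section

variable {V : Type*}

theorem IsPathBetween.mono {E E' : V → V → Prop} (hle : ∀ a b, E a b → E' a b) {D Y : V}
    {p : List V} (hp : IsPathBetween E D Y p) : IsPathBetween E' D Y p :=
  ⟨hp.1.imp fun a b => Or.imp (hle a b) (hle b a), hp.2⟩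

theorem ArrowIntoHead.mono {E E' : V → V → Prop} (hle : ∀ a b, E a b → E' a b) {p : List V}
    (hp : ArrowIntoHead E p) : ArrowIntoHead E' p :=
  let ⟨a, b, rest, hp, hba⟩ := hp
  ⟨a, b, rest, hp, hle b a hba⟩

theorem IsPathBetween.arrowIntoHead {E : V → V → Prop} {D Y : V} {p : List V}
    (hp : IsPathBetween E D Y p) (hDY : D ≠ Y) (hD : ∀ b, ¬ E D b) : ArrowIntoHead E p := by
  obtain ⟨hchain, -, hhead, hlast⟩ := hp
  match p, hchain, hhead, hlast with
  | [], _, hhead, _ => simp at hhead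
  | [a], _, hhead, hlast =>
    simp only [List.head?_cons, List.getLast?_singleton, Option.some.injEq] at hhead hlast
    exact absurd (hhead.symm.trans hlast) hDY
  | a :: b :: rest, hchain, hhead, _ =>
    obtain rfl : a = D := Option.some.inj hhead
    exact ⟨a, b, rest, rfl, (List.isChain_cons_cons.mp hchain).1.resolve_left (hD b)⟩

theorem List.Nodup.eq_zero_of_get_eq_head {p : List V} (hnd : p.Nodup) {D : V}
    (hhead : p.head? = some D) {j : ℕ} (hj : j < p.length) (hjD : p.get ⟨j, hj⟩ = D) :
    j = 0 := by
  obtain ⟨a, t, rfl⟩ := List.exists_cons_of_ne_nil (List.ne_nil_of_length_pos (l := p) (by omega))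
  obtain rfl : a = D := Option.some.inj hhead
  exact congrArg Fin.val ((hnd.get_inj_iff (j := ⟨0, by simp⟩)).mp hjD)

theorem Blocked.of_le {E E' : V → V → Prop} (hle : ∀ a b, E' a b → E a b) {Z : Set V}
    {p : List V}
    (hcollider : ∀ i (h : i + 2 < p.length),
      E (p.get ⟨i, by omega⟩) (p.get ⟨i + 1, by omega⟩) →
      E (p.get ⟨i + 2, h⟩) (p.get ⟨i + 1, by omega⟩) →
      E' (p.get ⟨i, by omega⟩) (p.get ⟨i + 1, by omega⟩) ∧
        E' (p.get ⟨i + 2, h⟩) (p.get ⟨i + 1, by omega⟩))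
    (hp : Blocked E Z p) : Blocked E' Z p := by
  obtain ⟨i, h, ⟨⟨hleft, hright⟩, hnotZ, hnoDesc⟩ | ⟨hnoncollider, hZ⟩⟩ := hp
  · exact ⟨i, h, .inl ⟨hcollider i h hleft hright, hnotZ,
      fun w hw hdesc => hnoDesc w hw (Relation.ReflTransGen.mono hle _ _ hdesc)⟩⟩
  · exact ⟨i, h, .inr ⟨fun ⟨hleft, hright⟩ => hnoncollider ⟨hle _ _ hleft, hle _ _ hright⟩, hZ⟩⟩

theorem IsPathBetween.collider_sources_ne_head {E : V → V → Prop}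
    (hasymm : ∀ a b, E a b → ¬ E b a) {D Y : V} {p : List V}
    (hp : IsPathBetween E D Y p) (harrow : ArrowIntoHead E p) (i : ℕ) (h : i + 2 < p.length)
    (hleft : E (p.get ⟨i, by omega⟩) (p.get ⟨i + 1, by omega⟩))
    (hright : E (p.get ⟨i + 2, h⟩) (p.get ⟨i + 1, by omega⟩)) :
    (E (p.get ⟨i, by omega⟩) (p.get ⟨i + 1, by omega⟩) ∧ p.get ⟨i, by omega⟩ ≠ D) ∧
      (E (p.get ⟨i + 2, h⟩) (p.get ⟨i + 1, by omega⟩) ∧ p.get ⟨i + 2, h⟩ ≠ D) := by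
  obtain ⟨-, hnd, hhead, -⟩ := hp
  refine ⟨⟨hleft, fun hiD => ?_⟩, hright, fun hD => by
    simpa using hnd.eq_zero_of_get_eq_head hhead h hD⟩
  obtain rfl := hnd.eq_zero_of_get_eq_head hhead _ hiD
  obtain ⟨a, b, rest, rfl, hba⟩ := harrow
  exact hasymm a b hleft hba

end

theorem stmt15_general {V : Type*}
    (E : V → V → Prop) (hacyclic : ∀ v, ¬ Relation.TransGen E v v)
    (D Y : V) (Z : Set V) (hDY : D ≠ Y)
    (hbd : BackDoor E D Y Z) :
    ∀ p : List V, IsPathBetween (fun a b => E a b ∧ a ≠ D) D Y p →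
      Blocked (fun a b => E a b ∧ a ≠ D) Z p := by
  intro p hp
  have hle : ∀ a b, E a b ∧ a ≠ D → E a b := fun _ _ => And.left
  have hpE : IsPathBetween E D Y p := hp.mono hle
  have harrow : ArrowIntoHead E p :=
    (hp.arrowIntoHead hDY fun _ hD => hD.2 rfl).mono hle
  exact (hbd.2 p hpE harrow).of_le hle (hpE.collider_sources_ne_head
    (fun a b hab hba => hacyclic a (.head hab (.single hba))) harrow)

theorem stmt15 {V : Type*} [Fintype V] [DecidableEq V]
    (E : V → V → Prop) (hacyclic : ∀ v, ¬ Relation.TransGen E v v)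
    (D Y : V) (Z : Set V) (hDY : D ≠ Y) (hDZ : D ∉ Z) (hYZ : Y ∉ Z)
    (hbd : BackDoor E D Y Z) :
    ∀ p : List V, IsPathBetween (fun a b => E a b ∧ a ≠ D) D Y p →
      Blocked (fun a b => E a b ∧ a ≠ D) Z p :=
  stmt15_general E hacyclic D Y Z hDY hbd
end
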